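/- arXiv:1811.10966 — 3 statements merged into one kernel-verified Lean document; each statement's English description precedes it below -/
import Mathlib

section
/- For the trefoil DGA over ℤ₂ and the augmentation ε with ε(a₃) = 1, ε(a₄) = ε(a₅) = 0, the linearized contact cohomology satisfies LCH²_ε ≅ ℤ₂ and LCH¹_ε ≅ (ℤ₂)², and LCH^k_ε = 0 for all other k. -/
noncomputable section

/-- Gradings of the dual generators `a₁^∨, …, a₅^∨` for the trefoil: `|a_i^∨| = |a_i| + 1`,
so `a₁^∨, a₂^∨` have degree `2` and `a₃^∨, a₄^∨, a₅^∨` have degree `1`. -/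
def degDual : Fin 5 → ℤ := ![2, 2, 1, 1, 1]

/-- The degree-`k` part of the linearized cochain complex. -/
def WD (k : ℤ) : Submodule (ZMod 2) (Fin 5 → ZMod 2) :=
  Submodule.span (ZMod 2) {x | ∃ i : Fin 5, degDual i = k ∧ x = Pi.single i 1}

/-- The matrix of the linearized codifferential `δ₁^ε` for the augmentation `ε` with
`ε(a₃) = 1`, `ε(a₄) = ε(a₅) = 0`: `δ(a₃^∨) = δ(a₅^∨) = a₁^∨ + a₂^∨`, and `δ = 0` on
`a₁^∨, a₂^∨, a₄^∨`. -/
def deltaMat : Matrix (Fin 5) (Fin 5) (ZMod 2) := fun i j =>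
  if (j = 2 ∨ j = 4) ∧ (i = 0 ∨ i = 1) then 1 else 0

/-- Linearized contact cohomology in degree `k`: degree-`k` cocycles modulo coboundaries. -/
abbrev LCHcoh (k : ℤ) :=
  ((WD k ⊓ LinearMap.ker (Matrix.mulVecLin deltaMat) :
      Submodule (ZMod 2) (Fin 5 → ZMod 2)) ⧸
    (Submodule.comap
      (WD k ⊓ LinearMap.ker (Matrix.mulVecLin deltaMat) :
        Submodule (ZMod 2) (Fin 5 → ZMod 2)).subtype
      (WD k ⊓ Submodule.map (Matrix.mulVecLin deltaMat) (WD (k - 1)))))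

local notation "ee" => fun (i : Fin 5) => (Pi.single i 1 : Fin 5 → ZMod 2)
local notation "δ" => Matrix.mulVecLin deltaMat

lemma hWD2 : WD 2 = Submodule.span (ZMod 2) (Set.range ![ee 0, ee 1]) := by
  unfold WD
  congr 1
  ext x
  constructor
  · rintro ⟨i, hi, rfl⟩
    fin_cases i <;> simp_all [degDual]
  · rintro ⟨i, rfl⟩
    fin_cases i
    · exact ⟨0, by decide, rfl⟩
    · exact ⟨1, by decide, rfl⟩

lemma hWD1 : WD 1 = Submodule.span (ZMod 2) (Set.range ![ee 2, ee 3, ee 4]) := by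
  unfold WD
  congr 1
  ext x
  constructor
  · rintro ⟨i, hi, rfl⟩
    fin_cases i <;> simp_all [degDual]
  · rintro ⟨i, rfl⟩
    fin_cases i
    · exact ⟨2, by decide, rfl⟩
    · exact ⟨3, by decide, rfl⟩
    · exact ⟨4, by decide, rfl⟩

lemma hWDbot (k : ℤ) (h1 : k ≠ 1) (h2 : k ≠ 2) : WD k = ⊥ := by
  unfold WD
  convert Submodule.span_empty
  ext x
  simp only [Set.mem_setOf_eq, Set.mem_empty_iff_false, iff_false]
  rintro ⟨i, hi, -⟩
  fin_cases i <;> simp_all [degDual]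

lemma hrank2 : Module.finrank (ZMod 2) (WD 2 ⊓ LinearMap.ker δ :
    Submodule (ZMod 2) (Fin 5 → ZMod 2)) = 2 := by
  have hle : WD 2 ≤ LinearMap.ker δ := by
    rw [hWD2, Submodule.span_le]
    rintro x ⟨i, rfl⟩
    fin_cases i <;> exact LinearMap.mem_ker.2 (by decide)
  rw [inf_eq_left.2 hle, hWD2]
  rw [finrank_span_eq_card (by rw [Fintype.linearIndependent_iff]; decide)]
  decide

lemma hrank1 : Module.finrank (ZMod 2) (WD 1 ⊓ LinearMap.ker δ :
    Submodule (ZMod 2) (Fin 5 → ZMod 2)) = 2 := by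
  have h3 : Module.finrank (ZMod 2) (WD 1) = 3 := by
    rw [hWD1, finrank_span_eq_card (by rw [Fintype.linearIndependent_iff]; decide)]
    decide
  have hlow : Submodule.span (ZMod 2) (Set.range ![ee 3, ee 2 + ee 4]) ≤
      WD 1 ⊓ LinearMap.ker δ := by
    rw [Submodule.span_le]
    rintro x ⟨i, rfl⟩
    fin_cases i
    · exact ⟨hWD1 ▸ Submodule.subset_span ⟨1, rfl⟩, LinearMap.mem_ker.2 (by decide)⟩
    · refine ⟨hWD1 ▸ Submodule.add_mem _ (Submodule.subset_span ⟨0, rfl⟩)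
        (Submodule.subset_span ⟨2, rfl⟩), LinearMap.mem_ker.2 (by decide)⟩
  have hrlow : Module.finrank (ZMod 2)
      (Submodule.span (ZMod 2) (Set.range ![ee 3, ee 2 + ee 4])) = 2 := by
    rw [finrank_span_eq_card (by rw [Fintype.linearIndependent_iff]; decide)]
    decide
  have hlt : WD 1 ⊓ LinearMap.ker δ < WD 1 := by
    refine lt_of_le_of_ne inf_le_left ?_
    intro h
    have hm0 : ee 2 ∈ WD 1 := by rw [hWD1]; exact Submodule.subset_span ⟨0, rfl⟩
    have hm : ee 2 ∈ WD 1 ⊓ LinearMap.ker δ := by rw [h]; exact hm0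
    have := (Submodule.mem_inf.1 hm).2
    rw [LinearMap.mem_ker] at this
    exact absurd this (by decide)
  have h1 : 2 ≤ Module.finrank (ZMod 2) (WD 1 ⊓ LinearMap.ker δ :
      Submodule (ZMod 2) (Fin 5 → ZMod 2)) := by
    have := Submodule.finrank_mono (R := ZMod 2) hlow
    omega
  have h2 : Module.finrank (ZMod 2) (WD 1 ⊓ LinearMap.ker δ :
      Submodule (ZMod 2) (Fin 5 → ZMod 2)) < 3 :=
    h3 ▸ Submodule.finrank_lt_finrank_of_lt hlt
  omega

lemma hB2 : WD 2 ⊓ Submodule.map δ (WD 1) =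
    Submodule.span (ZMod 2) {ee 0 + ee 1} := by
  apply le_antisymm
  · refine le_trans inf_le_right ?_
    rw [hWD1, Submodule.map_span, Submodule.span_le]
    rintro x ⟨y, ⟨i, rfl⟩, rfl⟩
    fin_cases i
    · exact Submodule.subset_span (by decide)
    · show δ (ee 3) ∈ _
      have : δ (ee 3) = 0 := by decide
      rw [this]; exact Submodule.zero_mem _
    · exact Submodule.subset_span (by decide)
  · rw [Submodule.span_le]
    rintro x rfl
    refine ⟨hWD2 ▸ Submodule.add_mem _ (Submodule.subset_span ⟨0, rfl⟩)
      (Submodule.subset_span ⟨1, rfl⟩), ⟨ee 2, hWD1 ▸ Submodule.subset_span ⟨0, rfl⟩, by decide⟩⟩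

set_option synthInstance.maxHeartbeats 1000000 in
set_option maxHeartbeats 1000000 in
lemma finrank_quot (A B : Submodule (ZMod 2) (Fin 5 → ZMod 2)) (h : B ≤ A) :
    Module.finrank (ZMod 2) (A ⧸ Submodule.comap A.subtype B) =
      Module.finrank (ZMod 2) A - Module.finrank (ZMod 2) B := by
  have h1 := Submodule.finrank_quotient_add_finrank (R := ZMod 2) (M := A)
    (Submodule.comap A.subtype B)
  have h2 : Module.finrank (ZMod 2) (Submodule.comap A.subtype B) =
      Module.finrank (ZMod 2) B := (Submodule.comapSubtypeEquivOfLe h).finrank_eq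
  rw [← h2]
  omega

/-- For the trefoil DGA over `ℤ₂` and the augmentation `ε` with
`ε(a₃) = 1`, `ε(a₄) = ε(a₅) = 0`, the linearized contact cohomology satisfies
`LCH²_ε ≅ ℤ₂`, `LCH¹_ε ≅ (ℤ₂)²`, and `LCH^k_ε = 0` for all other `k`. -/
theorem trefoil_linearized_cohomology :
    Module.finrank (ZMod 2) (LCHcoh 2) = 1 ∧
    Module.finrank (ZMod 2) (LCHcoh 1) = 2 ∧
    ∀ k : ℤ, k ≠ 1 → k ≠ 2 → Module.finrank (ZMod 2) (LCHcoh k) = 0 := by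
  refine ⟨?_, ?_, ?_⟩
  · have hB : WD 2 ⊓ Submodule.map δ (WD (2 - 1)) =
        Submodule.span (ZMod 2) {ee 0 + ee 1} := by
      norm_num [hB2]
    have hle : Submodule.span (ZMod 2) {ee 0 + ee 1} ≤ WD 2 ⊓ LinearMap.ker δ := by
      rw [Submodule.span_le]
      rintro x rfl
      refine Submodule.mem_inf.2 ⟨?_, LinearMap.mem_ker.2 (by decide)⟩
      rw [hWD2]
      exact Submodule.add_mem _ (Submodule.subset_span ⟨0, rfl⟩)
        (Submodule.subset_span ⟨1, rfl⟩)
    have hle' : WD 2 ⊓ Submodule.map δ (WD (2 - 1)) ≤ WD 2 ⊓ LinearMap.ker δ := by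
      rw [hB]; exact hle
    have hb1 : Module.finrank (ZMod 2) (WD 2 ⊓ Submodule.map δ (WD (2 - 1)) :
        Submodule (ZMod 2) (Fin 5 → ZMod 2)) = 1 := by
      rw [hB]; exact finrank_span_singleton (by decide)
    rw [finrank_quot _ _ hle', hrank2, hb1]
  · have hB : WD 1 ⊓ Submodule.map δ (WD (1 - 1)) = ⊥ := by
      norm_num [hWDbot 0 (by decide) (by decide)]
    have hb0 : Module.finrank (ZMod 2) (WD 1 ⊓ Submodule.map δ (WD (1 - 1)) :
        Submodule (ZMod 2) (Fin 5 → ZMod 2)) = 0 := by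
      rw [hB]; exact finrank_bot (ZMod 2) _
    rw [finrank_quot _ _ (hB ▸ bot_le), hrank1, hb0]
  · intro k hk1 hk2
    have hA : WD k ⊓ LinearMap.ker δ = ⊥ := by
      rw [hWDbot k hk1 hk2, bot_inf_eq]
    have h1 := Submodule.finrank_quotient_add_finrank (R := ZMod 2)
      (M := (WD k ⊓ LinearMap.ker δ : Submodule (ZMod 2) (Fin 5 → ZMod 2)))
      (Submodule.comap (WD k ⊓ LinearMap.ker δ :
        Submodule (ZMod 2) (Fin 5 → ZMod 2)).subtype
        (WD k ⊓ Submodule.map δ (WD (k - 1))))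
    have h1' : Module.finrank (ZMod 2) (LCHcoh k) +
        Module.finrank (ZMod 2)
          (Submodule.comap (WD k ⊓ LinearMap.ker δ :
            Submodule (ZMod 2) (Fin 5 → ZMod 2)).subtype
            (WD k ⊓ Submodule.map δ (WD (k - 1)))) =
        Module.finrank (ZMod 2) (WD k ⊓ LinearMap.ker δ :
          Submodule (ZMod 2) (Fin 5 → ZMod 2)) := h1
    have h0 : Module.finrank (ZMod 2) (WD k ⊓ LinearMap.ker δ :
        Submodule (ZMod 2) (Fin 5 → ZMod 2)) = 0 := by
      rw [hA]; exact finrank_bot (ZMod 2) _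
    omega
end
end

section
/- Let (A, ∂) be the DGA over ℤ₂ of the Legendrian knot m(10₁₃₂) with generators a₁, …, a₈ and differential ∂a₁ = 1 + a₈ + a₈a₄a₃, ∂a₂ = 1 + a₅a₇, ∂a₆ = a₇a₈, ∂a_i = 0 for i ∈ {3,4,5,7,8}. Then ∂(a₂a₈ + a₅a₆) = a₈ and ∂(a₁ + (a₂a₈ + a₅a₆)(1 + a₄a₃)) = 1; hence the homology of (A, ∂) is trivial. -/
noncomputable section

/-- The generators `a₁, …, a₈` (indexed `0, …, 7`) of the DGA of the Legendrian knot
`m(10₁₃₂)` over `ℤ₂`. -/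
def b (i : Fin 8) : FreeAlgebra (ZMod 2) (Fin 8) := FreeAlgebra.ι (ZMod 2) i

/-- For the DGA over `ℤ₂` of the Legendrian knot `m(10₁₃₂)` with
`∂a₁ = 1 + a₈ + a₈a₄a₃`, `∂a₂ = 1 + a₅a₇`, `∂a₆ = a₇a₈`, `∂a_i = 0` for
`i ∈ {3,4,5,7,8}`, one has `∂(a₂a₈ + a₅a₆) = a₈` and
`∂(a₁ + (a₂a₈ + a₅a₆)(1 + a₄a₃)) = 1`; hence the homology of `(A, ∂)` is trivial. -/
theorem m10_132_trivial_homology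
    (D : FreeAlgebra (ZMod 2) (Fin 8) →ₗ[ZMod 2] FreeAlgebra (ZMod 2) (Fin 8))
    (hD2 : ∀ x, D (D x) = 0)
    (hLeib : ∀ x y, D (x * y) = D x * y + x * D y)
    (h1 : D (b 0) = 1 + b 7 + b 7 * b 3 * b 2)
    (h2 : D (b 1) = 1 + b 4 * b 6)
    (h6 : D (b 5) = b 6 * b 7)
    (h3 : D (b 2) = 0) (h4 : D (b 3) = 0) (h5 : D (b 4) = 0)
    (h7 : D (b 6) = 0) (h8 : D (b 7) = 0) :
    D (b 1 * b 7 + b 4 * b 5) = b 7 ∧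
    D (b 0 + (b 1 * b 7 + b 4 * b 5) * (1 + b 3 * b 2)) = 1 ∧
    ∀ h : FreeAlgebra (ZMod 2) (Fin 8), D h = 0 →
      ∃ y, D y = h := by

  have tw : ∀ x : FreeAlgebra (ZMod 2) (Fin 8), x + x = 0 := CharTwo.add_self_eq_zero
  have hone : D 1 = 0 := by
    have h := hLeib 1 1
    rw [one_mul, mul_one, one_mul] at h
    rw [tw] at h
    exact h
  have key1 : D (b 1 * b 7 + b 4 * b 5) = b 7 := by
    rw [map_add, hLeib, hLeib, h2, h6, h5, h8]
    rw [mul_zero, add_zero, zero_mul, zero_add, add_mul, one_mul, mul_assoc]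
    rw [add_assoc, tw, add_zero]
  have key2 : D (b 0 + (b 1 * b 7 + b 4 * b 5) * (1 + b 3 * b 2)) = 1 := by
    have hz : D (1 + b 3 * b 2) = 0 := by
      rw [map_add, hone, hLeib, h4, h3, zero_mul, mul_zero, add_zero, add_zero]
    rw [map_add, h1, hLeib, key1, hz, mul_zero, add_zero, mul_add, mul_one,
      ← mul_assoc]
    calc 1 + b 7 + b 7 * b 3 * b 2 + (b 7 + b 7 * b 3 * b 2)
        = 1 + ((b 7 + b 7) + (b 7 * b 3 * b 2 + b 7 * b 3 * b 2)) := by abel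
      _ = 1 := by rw [tw, tw, add_zero, add_zero]
  refine ⟨key1, key2, fun h hh => ⟨(b 0 + (b 1 * b 7 + b 4 * b 5) * (1 + b 3 * b 2)) * h, ?_⟩⟩
  rw [hLeib, key2, hh, one_mul, mul_zero, add_zero]
end
end

section
/- In the appendix computation for the pretzel knot P(3,−3,−4): in the DGA (A, ∂) over ℤ with generators a₁,…,a₁₅ and differential as specified, one has ∂(a₇a₉a₆) = −a₇a₁₁a₁₂a₁₄a₆ and ∂(a₇a₉a₆ − a₃a₁₂a₁₄a₆ + a₁₂a₁) = a₁₂. -/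
noncomputable section

/-- Relations `t·t⁻¹ = t⁻¹·t = 1` in `ℤ⟨a₁, …, a₁₅, t^{±1}⟩`.  Generators: `Sum.inl i` is
`a_{i+1}`, `Sum.inr true` is `t`, `Sum.inr false` is `t⁻¹`. -/
inductive PRel : FreeAlgebra ℤ (Fin 15 ⊕ Bool) → FreeAlgebra ℤ (Fin 15 ⊕ Bool) → Prop
  | ts : PRel (FreeAlgebra.ι ℤ (Sum.inr true) * FreeAlgebra.ι ℤ (Sum.inr false)) 1
  | st : PRel (FreeAlgebra.ι ℤ (Sum.inr false) * FreeAlgebra.ι ℤ (Sum.inr true)) 1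

/-- The algebra `ℤ⟨a₁, …, a₁₅, t^{±1}⟩` of the DGA of the pretzel knot `P(3,−3,−4)`. -/
abbrev PAlg := RingQuot PRel

/-- The generators. -/
def pg (i : Fin 15 ⊕ Bool) : PAlg := RingQuot.mkAlgHom ℤ PRel (FreeAlgebra.ι ℤ i)

/-- `a_{i+1}` for `i : Fin 15`. -/
def pa (i : Fin 15) : PAlg := pg (Sum.inl i)

/-- The gradings: `|a₈| = |a₁₃| = 2`; `|a₁| = ⋯ = |a₅| = |a₁₀| = |a₁₅| = 1`;
`|a₆| = |a₇| = |a₁₁| = |a₁₄| = 0`; `|a₉| = −1`; `|a₁₂| = −2`; `|t^{±1}| = 0`. -/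
def pdeg : Fin 15 ⊕ Bool → ℤ :=
  Sum.elim ![1, 1, 1, 1, 1, 0, 0, 2, -1, 1, 0, -2, 2, 0, 1] (fun _ => 0)

/-- The degree-`d` part: the span of words of total degree `d`. -/
def pHom (d : ℤ) : Submodule ℤ PAlg :=
  Submodule.span ℤ {x | ∃ l : List (Fin 15 ⊕ Bool), (l.map pdeg).sum = d ∧ x = (l.map pg).prod}

lemma mem_pHom (l : List (Fin 15 ⊕ Bool)) : ((l.map pg).prod) ∈ pHom ((l.map pdeg).sum) :=
  Submodule.subset_span ⟨l, rfl, rfl⟩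


lemma pneg_mul (a b : PAlg) : -a * b = -(a * b) := neg_mul a b
lemma pmul_neg (a b : PAlg) : a * -b = -(a * b) := mul_neg a b
lemma pneg_neg (a : PAlg) : - -a = a := neg_neg a
lemma pneg_add_cancel (a : PAlg) : -a + a = 0 := neg_add_cancel a
lemma pz (a : PAlg) : (-1 : ℤ) • a = -a := neg_one_zsmul a
lemma po (a : PAlg) : (1 : ℤ) • a = a := one_smul ℤ a

/-- In the DGA `(A, ∂)` over `ℤ` of the Legendrian pretzel knot
`P(3,−3,−4)`, with the differential specified on the generators and extended by the signed
Leibniz rule, one has `∂(a₇a₉a₆) = −a₇a₁₁a₁₂a₁₄a₆` and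
`∂(a₇a₉a₆ − a₃a₁₂a₁₄a₆ + a₁₂a₁) = a₁₂`. -/
theorem pretzel_dga_computation
    (D : PAlg →ₗ[ℤ] PAlg)
    (h1 : D (pa 0) = 1 + pa 13 * pa 5)
    (h2 : D (pa 1) = 1 - pa 5 * pa 6 + pa 14 * pa 11 * pa 9)
    (h3 : D (pa 2) = 1 - pa 6 * pa 10)
    (h4 : D (pa 3) = 1 + pa 9 * pa 8 - pa 13 - pa 7 * pa 11 * pa 13)
    (h5 : D (pa 4) = pg (Sum.inr false) - pa 10 - pa 10 * pa 11 * pa 12 + pa 8 * pa 14)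
    (h8 : D (pa 7) = pa 9 * pa 10)
    (h9 : D (pa 8) = -(pa 10 * pa 11 * pa 13))
    (h13 : D (pa 12) = -(pa 13 * pa 14))
    (h6 : D (pa 5) = 0) (h7 : D (pa 6) = 0) (h10 : D (pa 9) = 0)
    (h11 : D (pa 10) = 0) (h12 : D (pa 11) = 0) (h14 : D (pa 13) = 0)
    (h15 : D (pa 14) = 0)
    (hT : D (pg (Sum.inr true)) = 0) (hS : D (pg (Sum.inr false)) = 0)
    (hLeib : ∀ d : ℤ, ∀ x ∈ pHom d, ∀ y,
      D (x * y) = D x * y + (if Even d then (1 : ℤ) else -1) • (x * D y)) :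
    D (pa 6 * pa 8 * pa 5) = -(pa 6 * pa 10 * pa 11 * pa 13 * pa 5) ∧
    D (pa 6 * pa 8 * pa 5 - pa 2 * pa 11 * pa 13 * pa 5 + pa 11 * pa 0) = pa 11 := by
  have m6 : pa 6 ∈ pHom 0 := by
    simpa [pa, pdeg] using mem_pHom [Sum.inl 6]
  have m68 : pa 6 * pa 8 ∈ pHom (-1) := by
    simpa [pa, pdeg, mul_assoc] using mem_pHom [Sum.inl 6, Sum.inl 8]
  have m2 : pa 2 ∈ pHom 1 := by
    simpa [pa, pdeg] using mem_pHom [Sum.inl 2]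
  have m211 : pa 2 * pa 11 ∈ pHom (-1) := by
    simpa [pa, pdeg, mul_assoc] using mem_pHom [Sum.inl 2, Sum.inl 11]
  have m21113 : pa 2 * pa 11 * pa 13 ∈ pHom (-1) := by
    simpa [pa, pdeg, mul_assoc] using mem_pHom [Sum.inl 2, Sum.inl 11, Sum.inl 13]
  have m11 : pa 11 ∈ pHom (-2) := by
    simpa [pa, pdeg] using mem_pHom [Sum.inl 11]
  have e1 : D (pa 6 * pa 8) = pa 6 * -(pa 10 * pa 11 * pa 13) := by
    rw [hLeib 0 (pa 6) m6 (pa 8), h7, h9]; simp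
  have key1 : D (pa 6 * pa 8 * pa 5) = -(pa 6 * pa 10 * pa 11 * pa 13 * pa 5) := by
    rw [hLeib (-1) _ m68 (pa 5), h6, e1]
    have : ¬ Even (-1 : ℤ) := by decide
    simp [pz, po, pneg_mul, pmul_neg, pneg_neg, pneg_add_cancel, mul_assoc, this]
  refine ⟨key1, ?_⟩
  have e2 : D (pa 2 * pa 11) = (1 - pa 6 * pa 10) * pa 11 := by
    rw [hLeib 1 (pa 2) m2 (pa 11), h3, h12]
    have : ¬ Even (1 : ℤ) := by decide
    simp [this]
  have e3 : D (pa 2 * pa 11 * pa 13) = (1 - pa 6 * pa 10) * pa 11 * pa 13 := by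
    rw [hLeib (-1) _ m211 (pa 13), h14, e2]
    have : ¬ Even (-1 : ℤ) := by decide
    simp [this]
  have e4 : D (pa 2 * pa 11 * pa 13 * pa 5) = (1 - pa 6 * pa 10) * pa 11 * pa 13 * pa 5 := by
    rw [hLeib (-1) _ m21113 (pa 5), h6, e3]
    have : ¬ Even (-1 : ℤ) := by decide
    simp [this]
  have e5 : D (pa 11 * pa 0) = pa 11 * (1 + pa 13 * pa 5) := by
    rw [hLeib (-2) (pa 11) m11 (pa 0), h12, h1]
    have : Even (-2 : ℤ) := by decide
    simp [this]
  rw [map_add, map_sub, key1, e4, e5]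
  simp [pz, po, pneg_mul, pmul_neg, pneg_neg, pneg_add_cancel, mul_assoc, sub_eq_add_neg, mul_add, add_mul, mul_one, one_mul]
end
end
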